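/- For any strictly positive joint distribution p on V × V and any w2 ∈ V, the KL divergence from p_{1|2}(·|w2) to the MRF conditional q_{1|2}(·|w2) is nonnegative, with equality if and only if p_{2|1}(w2|w) is constant over all w in V. -/

import Mathlib

/-!
Cancelling the normalising constant `Z`, the MRF conditional `q_{1|2}(·|w2)` is the tilt of
`a = p_{1|2}(·|w2)` by `x = p_{2|1}(w2|·)`, i.e. `q_{1|2}(w|w2) = a w * x w / ∑ v, a v * x v`.
Hence the KL divergence equals the Jensen gap `log (∑ a x) - ∑ a log x` of the logarithm,
which is nonnegative and, by strict concavity of `log`, vanishes iff `x` is constant.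
-/

open Finset Real

section JensenGap

variable {ι : Type*} {s : Finset ι} {a x : ι → ℝ}

theorem sum_mul_log_div_tilt_eq_log_sum_mul_sub (ha : ∀ i ∈ s, 0 < a i)
    (ha₁ : ∑ i ∈ s, a i = 1) (hx : ∀ i ∈ s, 0 < x i) :
    ∑ i ∈ s, a i * log (a i / (a i * x i / ∑ j ∈ s, a j * x j)) =
      log (∑ i ∈ s, a i * x i) - ∑ i ∈ s, a i * log (x i) := by
  have hS : 0 < ∑ j ∈ s, a j * x j :=
    sum_pos (fun j hj => mul_pos (ha j hj) (hx j hj))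
      (nonempty_of_sum_ne_zero (f := a) (by rw [ha₁]; exact one_ne_zero))
  calc ∑ i ∈ s, a i * log (a i / (a i * x i / ∑ j ∈ s, a j * x j))
      = ∑ i ∈ s, (a i * log (∑ j ∈ s, a j * x j) - a i * log (x i)) := by
        refine sum_congr rfl fun i hi => ?_
        rw [div_div_eq_mul_div, mul_div_mul_left _ _ (ha i hi).ne',
          log_div hS.ne' (hx i hi).ne', mul_sub]
    _ = log (∑ i ∈ s, a i * x i) - ∑ i ∈ s, a i * log (x i) := by
        rw [sum_sub_distrib, ← sum_mul, ha₁, one_mul]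

theorem sum_mul_log_le_log_sum_mul (ha : ∀ i ∈ s, 0 ≤ a i) (ha₁ : ∑ i ∈ s, a i = 1)
    (hx : ∀ i ∈ s, 0 < x i) :
    ∑ i ∈ s, a i * log (x i) ≤ log (∑ i ∈ s, a i * x i) :=
  strictConcaveOn_log_Ioi.concaveOn.le_map_sum ha ha₁ hx

theorem log_sum_mul_eq_sum_mul_log_iff (ha : ∀ i ∈ s, 0 < a i) (ha₁ : ∑ i ∈ s, a i = 1)
    (hx : ∀ i ∈ s, 0 < x i) :
    log (∑ i ∈ s, a i * x i) = ∑ i ∈ s, a i * log (x i) ↔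
      ∀ i ∈ s, ∀ j ∈ s, x i = x j :=
  strictConcaveOn_log_Ioi.map_sum_eq_iff_of_pos ha ha₁ hx

theorem sum_mul_log_div_tilt_nonneg_and_eq_zero_iff (ha : ∀ i ∈ s, 0 < a i)
    (ha₁ : ∑ i ∈ s, a i = 1) (hx : ∀ i ∈ s, 0 < x i) :
    0 ≤ ∑ i ∈ s, a i * log (a i / (a i * x i / ∑ j ∈ s, a j * x j)) ∧
      (∑ i ∈ s, a i * log (a i / (a i * x i / ∑ j ∈ s, a j * x j)) = 0 ↔
        ∀ i ∈ s, ∀ j ∈ s, x i = x j) := by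
  rw [sum_mul_log_div_tilt_eq_log_sum_mul_sub ha ha₁ hx, sub_nonneg, sub_eq_zero]
  exact ⟨sum_mul_log_le_log_sum_mul (fun i hi => (ha i hi).le) ha₁ hx,
    log_sum_mul_eq_sum_mul_log_iff ha ha₁ hx⟩

end JensenGap

theorem div_const_div_sum_div_const {ι : Type*} (s : Finset ι) (f : ι → ℝ) {c : ℝ}
    (hc : c ≠ 0) (i : ι) : f i / c / ∑ j ∈ s, f j / c = f i / ∑ j ∈ s, f j := by
  rw [← sum_div, div_div_div_cancel_right₀ hc]

theorem kl_to_mrf_conditional_nonneg_eq_iff_const_general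
    {V : Type*} [Fintype V] (p : V → V → ℝ)
    (hpos : ∀ w1 w2, 0 < p w1 w2)
    (w2 : V) :
    let p1 : V → ℝ := fun w1 => ∑ w' : V, p w1 w'
    let p2 : V → ℝ := fun v => ∑ w' : V, p w' v
    let p12 : V → V → ℝ := fun a b => p a b / p2 b
    let p21 : V → V → ℝ := fun b a => p a b / p1 a
    let Z : ℝ := ∑ a : V, ∑ b : V, p12 a b * p21 b a
    let q : V → V → ℝ := fun a b => p12 a b * p21 b a / Z
    let q12 : V → V → ℝ := fun a b => q a b / ∑ w' : V, q w' b
    let KL : ℝ := ∑ w : V, p12 w w2 * Real.log (p12 w w2 / q12 w w2)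
    0 ≤ KL ∧ (KL = 0 ↔ ∀ w w' : V, p21 w2 w = p21 w2 w') := by
  intro p1 p2 p12 p21 Z q q12 KL
  have hV : (univ : Finset V).Nonempty := ⟨w2, mem_univ w2⟩
  have hp2 : 0 < p2 w2 := sum_pos (fun w _ => hpos w w2) hV
  have hp12 : ∀ a b, 0 < p12 a b := fun a b =>
    div_pos (hpos a b) (sum_pos (fun _ _ => hpos _ b) hV)
  have hp21 : ∀ b a, 0 < p21 b a := fun b a =>
    div_pos (hpos a b) (sum_pos (fun _ _ => hpos a _) hV)
  have hZ : Z ≠ 0 :=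
    (sum_pos (fun a _ => sum_pos (fun b _ => mul_pos (hp12 a b) (hp21 b a)) hV) hV).ne'
  have hp12_sum : ∑ w, p12 w w2 = 1 := by rw [← sum_div]; exact div_self hp2.ne'
  have hKL : KL = ∑ w, p12 w w2 *
      log (p12 w w2 / (p12 w w2 * p21 w2 w / ∑ v, p12 v w2 * p21 w2 v)) :=
    sum_congr rfl fun w _ => by
      rw [show q12 w w2 = _ from
        div_const_div_sum_div_const univ (fun v => p12 v w2 * p21 w2 v) hZ w]
  rw [hKL]
  simpa using sum_mul_log_div_tilt_nonneg_and_eq_zero_iff (fun w _ => hp12 w w2) hp12_sum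
    (fun w _ => hp21 w2 w)

/-- For any strictly positive joint `p` on `V × V` and any `w2`,
the KL divergence from `p_{1|2}(·|w2)` to the MRF conditional `q_{1|2}(·|w2)` is
nonnegative, with equality iff `p_{2|1}(w2|w)` is constant in `w`. -/
theorem kl_to_mrf_conditional_nonneg_eq_iff_const
    {V : Type*} [Fintype V] [Nonempty V] (p : V → V → ℝ)
    (hpos : ∀ w1 w2, 0 < p w1 w2)
    (hsum : (∑ w1 : V, ∑ w2 : V, p w1 w2) = 1) (w2 : V) :
    let p1 : V → ℝ := fun w1 => ∑ w' : V, p w1 w'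
    let p2 : V → ℝ := fun v => ∑ w' : V, p w' v
    let p12 : V → V → ℝ := fun a b => p a b / p2 b
    let p21 : V → V → ℝ := fun b a => p a b / p1 a
    let Z : ℝ := ∑ a : V, ∑ b : V, p12 a b * p21 b a
    let q : V → V → ℝ := fun a b => p12 a b * p21 b a / Z
    let q12 : V → V → ℝ := fun a b => q a b / ∑ w' : V, q w' b
    let KL : ℝ := ∑ w : V, p12 w w2 * Real.log (p12 w w2 / q12 w w2)
    0 ≤ KL ∧ (KL = 0 ↔ ∀ w w' : V, p21 w2 w = p21 w2 w') :=
  kl_to_mrf_conditional_nonneg_eq_iff_const_general p hpos w2
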